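/- arXiv:1806.08713 — 2 statements merged into one kernel-verified Lean document; each statement's English description precedes it below -/
import Mathlib

section
/- In the common-favorites swap Schelling game on a regular network (for any tolerance parameter τ ∈ [0,1] and any window size w ≥ 1), the number of colored pairs Φ is an ordinal potential function: if G is such that every node has the same number k of nodes within distance w (|N_w(u)| = k for all u ∈ V), and all agents share the same favorite node, then for every bijective placement p and every improving swap producing the placement p', one has Φ(p') < Φ(p). Consequently the cf-SSG on regular networks is a potential game. -/
open SimpleGraph Finset

namespace Schelling

variable {V I : Type*}

/-- The `w`-neighborhood of a node `u`: all nodes `v ≠ u` with `d_G(u,v) ≤ w`. -/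
def nbhd (G : SimpleGraph V) (w : ℕ) (u : V) : Set V :=
  {v | v ≠ u ∧ G.dist u v ≤ w}

/-- `|N⁺(p(x))|`: number of nodes in the `w`-neighborhood of `p x` occupied by
agents of the same type as `x`. -/
noncomputable def sCount (G : SimpleGraph V) (w : ℕ) (tp : I → Bool) (p : I → V) (x : I) : ℕ :=
  {v | v ∈ nbhd G w (p x) ∧ ∃ y, p y = v ∧ tp y = tp x}.ncard

/-- `|N⁻(p(x))|`: number of nodes in the `w`-neighborhood of `p x` occupied by
agents of the other type. -/
noncomputable def dCount (G : SimpleGraph V) (w : ℕ) (tp : I → Bool) (p : I → V) (x : I) : ℕ :=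
  {v | v ∈ nbhd G w (p x) ∧ ∃ y, p y = v ∧ tp y ≠ tp x}.ncard

/-- An agent is isolated if no node of its neighborhood is occupied. -/
def isolated (G : SimpleGraph V) (w : ℕ) (tp : I → Bool) (p : I → V) (x : I) : Prop :=
  sCount G w tp p x + dCount G w tp p x = 0

/-- The (scalar) cost of agent `x`: `τ` if isolated, otherwise
`max 0 (τ - |N⁺|/(|N⁺| + |N⁻|))`. -/
noncomputable def ucost (G : SimpleGraph V) (w : ℕ) (τ : ℝ) (tp : I → Bool) (p : I → V)
    (x : I) : ℝ :=
  if sCount G w tp p x + dCount G w tp p x = 0 then τ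
  else max 0 (τ - (sCount G w tp p x : ℝ) / ((sCount G w tp p x : ℝ) + (dCount G w tp p x : ℝ)))

/-- An agent is happy if it is not isolated and its local happiness ratio is at least `τ`. -/
def happy (G : SimpleGraph V) (w : ℕ) (τ : ℝ) (tp : I → Bool) (p : I → V) (x : I) : Prop :=
  sCount G w tp p x + dCount G w tp p x ≠ 0 ∧
    τ ≤ (sCount G w tp p x : ℝ) / ((sCount G w tp p x : ℝ) + (dCount G w tp p x : ℝ))

/-- The vector cost of agent `x`: scalar cost together with `d_G(fav_x, p x) + 1`,
to be compared lexicographically. -/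
noncomputable def vcost (G : SimpleGraph V) (w : ℕ) (τ : ℝ) (tp : I → Bool) (fav : I → V)
    (p : I → V) (x : I) : ℝ × ℕ :=
  (ucost G w τ tp p x, G.dist (fav x) (p x) + 1)

/-- The number of colored pairs `Φ(p) = (1/2) · Σ_x |N⁻(p(x))|`. -/
noncomputable def Phi [Fintype I] (G : SimpleGraph V) (w : ℕ) (tp : I → Bool) (p : I → V) : ℝ :=
  (1 / 2) * ∑ x : I, (dCount G w tp p x : ℝ)

/-- The pair potential `(Φ(p), Σ_x d_G(fav_x, p x))`, compared lexicographically. -/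
noncomputable def PhiPair [Fintype I] (G : SimpleGraph V) (w : ℕ) (tp : I → Bool) (fav : I → V)
    (p : I → V) : ℝ × ℕ :=
  (Phi G w tp p, ∑ x : I, G.dist (fav x) (p x))

/-- The placement obtained from `p` by swapping the locations of agents `x` and `y`. -/
def swapP [DecidableEq I] (p : I → V) (x y : I) : I → V := p ∘ Equiv.swap x y

/-- The agents of type `A`. -/
def typeA [Fintype I] (tp : I → Bool) : Finset I := Finset.univ.filter (fun i => tp i = true)

/-- The agents of type `B`. -/
def typeB [Fintype I] (tp : I → Bool) : Finset I := Finset.univ.filter (fun i => tp i = false)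

/-- A placement is stable for the uniform SSG if no pair of agents can both strictly
decrease their cost by swapping. -/
def uStable (G : SimpleGraph V) (w : ℕ) (τ : ℝ) (tp : I → Bool) (p : I → V)
    [DecidableEq I] : Prop :=
  ∀ x y : I, ¬ (ucost G w τ tp (swapP p x y) x < ucost G w τ tp p x ∧
                ucost G w τ tp (swapP p x y) y < ucost G w τ tp p y)

/-- A placement is stable for the SSG with favorite nodes if no pair of agents can both
strictly lexicographically decrease their cost vector by swapping. -/
def vStable (G : SimpleGraph V) (w : ℕ) (τ : ℝ) (tp : I → Bool) (fav : I → V) (p : I → V)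
    [DecidableEq I] : Prop :=
  ∀ x y : I, ¬ (toLex (vcost G w τ tp fav (swapP p x y) x) < toLex (vcost G w τ tp fav p x) ∧
                toLex (vcost G w τ tp fav (swapP p x y) y) < toLex (vcost G w τ tp fav p y))



open Classical in
/-- The weight of the (ordered) pair of nodes `(u,v)` in the jump-game potential:
`1` if both are occupied by agents of different types, `1/3` if at least one is empty,
and `0` otherwise. -/
noncomputable def edgeW (tp : I → Bool) (p : I → V) (u v : V) : ℝ :=
  if ∃ x y : I, p x = u ∧ p y = v ∧ tp x ≠ tp y then 1
  else if (∀ x : I, p x ≠ u) ∨ (∀ y : I, p y ≠ v) then 1 / 3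
  else 0

open Classical in
/-- The edge-weight potential `Φ(p) = Σ_{e ∈ E} w_e(p)`, written as half the sum over
ordered adjacent pairs (each edge is counted twice, and `edgeW` is symmetric). -/
noncomputable def jumpPhi [Fintype V] (G : SimpleGraph V) (tp : I → Bool) (p : I → V) : ℝ :=
  (1 / 2) * ∑ u : V, ∑ v : V, if G.Adj u v then edgeW tp p u v else 0

/-- A placement is stable for the uniform JSG if no agent can strictly decrease her cost
by jumping to an empty node. -/
def jStable (G : SimpleGraph V) (w : ℕ) (τ : ℝ) (tp : I → Bool) (p : I → V)
    [DecidableEq I] : Prop :=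
  ∀ (x : I) (v : V), v ∉ Set.range p →
    ¬ (ucost G w τ tp (Function.update p x v) x < ucost G w τ tp p x)

/-- The social cost of a placement: the number of unhappy agents together with the total
distance cost, compared lexicographically. -/
noncomputable def socialCost [Fintype I] (G : SimpleGraph V) (w : ℕ) (τ : ℝ) (tp : I → Bool)
    (fav : I → V) (p : I → V) : ℕ × ℕ :=
  ({x : I | ¬ happy G w τ tp p x}.ncard, ∑ x : I, (G.dist (fav x) (p x) + 1))


end Schelling

open Schelling

/-!
Let `H` be the graph joining distinct nodes at distance at most `w`; it is `k`-regular. For a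
bijective placement and `A` the set of nodes occupied by one of the two types, `Φ` is `cut(A)`,
the number of `H`-edges between `A` and its complement. Writing `e(T)` for twice the number of
`H`-edges inside `T`, regularity gives, for every `v ∉ T`,
`cut(T ∪ {v}) + 2 |N(v) ∩ T| + e(T) = k (|T| + 1)`.
Applied to `T = A \ {a}` with `v = a ∈ A` and with `v = b ∉ A`, this shows that swapping the agents
on `a` and `b` lowers `Φ` by twice the gain in same-type neighbours of either of them. Swapping two
agents of the same type just exchanges their cost vectors, so it is never improving. In a swap of
agents of different types the distances to the common favourite node cannot both drop, so one agent
strictly lowers its scalar cost; as its neighbourhood always has `k` nodes, it strictly gains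
same-type neighbours, and `Φ` strictly decreases.
-/

namespace SimpleGraph

variable {V : Type*} [Fintype V] [DecidableEq V] (H : SimpleGraph V) [DecidableRel H.Adj]

def cutCard (A : Finset V) : ℕ := ∑ u ∈ A, #(H.neighborFinset u \ A)

theorem sum_compl_card_neighborFinset_inter (A : Finset V) :
    ∑ u ∈ Aᶜ, #(H.neighborFinset u ∩ A) = H.cutCard A := by
  rw [cutCard]
  convert sum_card_bipartiteAbove_eq_sum_card_bipartiteBelow (s := Aᶜ) (t := A) (r := H.Adj)
    using 3 with u - v -
  · ext v; simp [bipartiteAbove, and_comm]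
  · ext u; simp [bipartiteBelow, H.adj_comm, and_comm]

theorem sum_card_neighborFinset_inter_insert {v : V} {T : Finset V} (hv : v ∉ T) :
    ∑ u ∈ insert v T, #(H.neighborFinset u ∩ insert v T)
      = ∑ u ∈ T, #(H.neighborFinset u ∩ T) + 2 * #(H.neighborFinset v ∩ T) := by
  have hself : H.neighborFinset v ∩ insert v T = H.neighborFinset v ∩ T :=
    inter_insert_of_notMem (H.notMem_neighborFinset_self v)
  have hother : ∀ u ∈ T, #(H.neighborFinset u ∩ insert v T)
      = #(H.neighborFinset u ∩ T) + if v ∈ H.neighborFinset u then 1 else 0 := by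
    intro u _
    split_ifs with huv
    · rw [inter_insert_of_mem huv, card_insert_of_notMem fun h => hv (mem_inter.1 h).2]
    · rw [inter_insert_of_notMem huv, add_zero]
  have hcount : ∑ u ∈ T, (if v ∈ H.neighborFinset u then 1 else 0)
      = #(H.neighborFinset v ∩ T) := by
    rw [sum_boole, Nat.cast_id, filter_mem_eq_inter.symm]
    congr 1
    ext u; simp [H.adj_comm, and_comm]
  rw [sum_insert hv, hself, sum_congr rfl hother, sum_add_distrib, hcount]
  ring

theorem filter_neighborFinset_eq_inter {P : V → Prop} [DecidablePred P] {u : V} {A : Finset V}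
    (hA : ∀ v ≠ u, P v ↔ v ∈ A) : {v ∈ H.neighborFinset u | P v} = H.neighborFinset u ∩ A := by
  ext v
  simp only [mem_filter, mem_inter, mem_neighborFinset]
  exact and_congr_right fun h => hA v h.ne'

variable {H}

theorem IsRegularOfDegree.cutCard_add_sum_card_inter {k : ℕ} (hreg : H.IsRegularOfDegree k)
    (A : Finset V) : H.cutCard A + ∑ u ∈ A, #(H.neighborFinset u ∩ A) = k * #A := by
  rw [cutCard, ← sum_add_distrib, sum_congr rfl fun u _ => card_sdiff_add_card_inter _ _,
    sum_congr rfl fun u _ => (H.card_neighborFinset_eq_degree u).trans (hreg.degree_eq u),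
    sum_const, smul_eq_mul, mul_comm]

theorem IsRegularOfDegree.cutCard_insert_add {k : ℕ} (hreg : H.IsRegularOfDegree k)
    {v : V} {T : Finset V} (hv : v ∉ T) :
    H.cutCard (insert v T) + 2 * #(H.neighborFinset v ∩ T) + ∑ u ∈ T, #(H.neighborFinset u ∩ T)
      = k * (#T + 1) := by
  have := hreg.cutCard_add_sum_card_inter (insert v T)
  rw [H.sum_card_neighborFinset_inter_insert hv, card_insert_of_notMem hv] at this
  omega

variable (H)

theorem sum_card_filter_ne_eq_two_mul_cutCard (c : V → Bool) (t : Bool) :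
    ∑ u, #{v ∈ H.neighborFinset u | c v ≠ c u} = 2 * H.cutCard {u | c u = t} := by
  rw [← sum_add_sum_compl {u | c u = t}, two_mul]
  congr 1
  · refine sum_congr rfl fun u hu => congrArg card ?_
    ext v; simp_all
  · rw [← H.sum_compl_card_neighborFinset_inter]
    refine sum_congr rfl fun u hu => congrArg card ?_
    ext v
    simp only [mem_compl, mem_filter, mem_univ, true_and] at hu
    cases hcv : c v <;> cases hcu : c u <;> cases t <;> simp_all

end SimpleGraph

namespace Schelling

variable {V I : Type*}

def windowGraph (G : SimpleGraph V) (w : ℕ) : SimpleGraph V where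
  Adj u v := u ≠ v ∧ G.dist u v ≤ w
  symm := ⟨fun _ _ h => ⟨h.1.symm, G.dist_comm ▸ h.2⟩⟩
  loopless := ⟨fun _ h => h.1 rfl⟩

noncomputable instance (G : SimpleGraph V) (w : ℕ) : DecidableRel (windowGraph G w).Adj :=
  Classical.decRel _

theorem neighborSet_windowGraph (G : SimpleGraph V) (w : ℕ) (u : V) :
    (windowGraph G w).neighborSet u = nbhd G w u := by
  ext v
  simp [windowGraph, nbhd, ne_comm]

theorem isRegularOfDegree_windowGraph [Fintype V] {G : SimpleGraph V} {w k : ℕ}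
    (hreg : ∀ u, (nbhd G w u).ncard = k) : (windowGraph G w).IsRegularOfDegree k := fun u => by
  rw [← card_neighborFinset_eq_degree, ← Set.ncard_coe_finset, coe_neighborFinset,
    neighborSet_windowGraph, hreg]

section Counts

variable [Fintype V] (G : SimpleGraph V) (w : ℕ) (tp : I → Bool) {p : I → V} {c : V → Bool}

theorem ncard_nbhd_occupied (hc : ∀ z, c (p z) = tp z) (hp : Function.Surjective p)
    (P : Bool → Prop) [DecidablePred P] (u : V) :
    {v | v ∈ nbhd G w u ∧ ∃ y, p y = v ∧ P (tp y)}.ncard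
      = #{v ∈ (windowGraph G w).neighborFinset u | P (c v)} := by
  rw [← Set.ncard_coe_finset]
  congr 1
  ext v
  simp only [Set.mem_ofPred_eq, coe_filter, mem_neighborFinset, ← mem_neighborSet,
    neighborSet_windowGraph]
  refine and_congr_right fun _ => ⟨?_, fun h => ?_⟩
  · rintro ⟨y, rfl, hy⟩
    rwa [hc]
  · obtain ⟨y, rfl⟩ := hp v
    exact ⟨y, rfl, hc y ▸ h⟩

theorem sCount_eq (hc : ∀ z, c (p z) = tp z) (hp : Function.Surjective p) (z : I) :
    sCount G w tp p z = #{v ∈ (windowGraph G w).neighborFinset (p z) | c v = tp z} :=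
  ncard_nbhd_occupied G w tp hc hp (· = tp z) (p z)

theorem dCount_eq (hc : ∀ z, c (p z) = tp z) (hp : Function.Surjective p) (z : I) :
    dCount G w tp p z = #{v ∈ (windowGraph G w).neighborFinset (p z) | c v ≠ tp z} :=
  ncard_nbhd_occupied G w tp hc hp (· ≠ tp z) (p z)

theorem sCount_add_dCount {k : ℕ} (hreg : (windowGraph G w).IsRegularOfDegree k)
    (hp : Function.Bijective p) (z : I) : sCount G w tp p z + dCount G w tp p z = k := by
  classical
  have hc : ∀ z, Function.extend p tp (fun _ => false) (p z) = tp z := hp.1.extend_apply _ _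
  rw [sCount_eq G w tp hc hp.2, dCount_eq G w tp hc hp.2, card_filter_add_card_filter_not,
    card_neighborFinset_eq_degree, hreg.degree_eq]

theorem Phi_eq_cutCard [Fintype I] [DecidableEq V] (hc : ∀ z, c (p z) = tp z)
    (hp : Function.Bijective p) (t : Bool) :
    Phi G w tp p = (windowGraph G w).cutCard {u | c u = t} := by
  have hsum : ∑ z, dCount G w tp p z = 2 * (windowGraph G w).cutCard {u | c u = t} := by
    simp_rw [dCount_eq G w tp hc hp.2, ← hc]
    rw [hp.sum_comp (fun u => #{v ∈ (windowGraph G w).neighborFinset u | c v ≠ c u}),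
      sum_card_filter_ne_eq_two_mul_cutCard]
  rw [Phi, ← Nat.cast_sum, hsum]
  push_cast
  ring

end Counts

section Swap

variable [DecidableEq I]

@[simp]
theorem swapP_apply_left (p : I → V) (x y : I) : swapP p x y x = p y :=
  congrArg p (Equiv.swap_apply_left x y)

@[simp]
theorem swapP_apply_right (p : I → V) (x y : I) : swapP p x y y = p x :=
  congrArg p (Equiv.swap_apply_right x y)

theorem swapP_comm (p : I → V) (x y : I) : swapP p y x = swapP p x y := by
  rw [swapP, swapP, Equiv.swap_comm]

theorem Phi_swapP_add_two_mul_sCount [Fintype V] [Fintype I] {G : SimpleGraph V} {w k : ℕ}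
    (hreg : (windowGraph G w).IsRegularOfDegree k) {tp : I → Bool} {p : I → V}
    (hp : Function.Bijective p) {x y : I} (htp : tp x ≠ tp y) :
    Phi G w tp (swapP p x y) + 2 * sCount G w tp (swapP p x y) x
      = Phi G w tp p + 2 * sCount G w tp p x := by
  classical
  set c := Function.extend p tp (fun _ => false)
  set c' := c ∘ Equiv.swap (p x) (p y)
  have hc : ∀ z, c (p z) = tp z := hp.1.extend_apply _ _
  have hc' : ∀ z, c' (swapP p x y z) = tp z := fun z => by
    simp only [c', Function.comp_apply, swapP, hp.1.swap_apply, Equiv.swap_apply_self, hc]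
  have hp' : Function.Bijective (swapP p x y) := hp.comp (Equiv.swap x y).bijective
  -- the nodes of the other agents of `x`'s type, untouched by the swap
  set T : Finset V := {u | c u = tp x ∧ u ≠ p x}
  have hpx : p x ∉ T := by simp [T]
  have hpy : p y ∉ T := by simp [T, hc, Ne.symm htp]
  have hA : ({u | c u = tp x} : Finset V) = insert (p x) T := by
    ext u
    by_cases hu : u = p x <;> simp [T, hu, hc]
  have hA' : ({u | c' u = tp x} : Finset V) = insert (p y) T := by
    ext u
    have hxy : p x ≠ p y := fun h => htp (by rw [← hc, h, hc])
    rcases eq_or_ne u (p x) with rfl | hux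
    · simp [c', T, hc, Ne.symm htp, hxy, hpx]
    rcases eq_or_ne u (p y) with rfl | huy
    · simp [c', hc]
    · simp [c', T, Equiv.swap_apply_of_ne_of_ne hux huy, hux, huy]
  have hsx : sCount G w tp p x = #((windowGraph G w).neighborFinset (p x) ∩ T) := by
    rw [sCount_eq G w tp hc hp.2, filter_neighborFinset_eq_inter]
    intro v hv
    simpa [hv] using Finset.ext_iff.1 hA v
  have hsx' : sCount G w tp (swapP p x y) x = #((windowGraph G w).neighborFinset (p y) ∩ T) := by
    rw [sCount_eq G w tp hc' hp'.2, swapP_apply_left, filter_neighborFinset_eq_inter]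
    intro v hv
    simpa [hv] using Finset.ext_iff.1 hA' v
  rw [Phi_eq_cutCard G w tp hc hp (tp x), Phi_eq_cutCard G w tp hc' hp' (tp x), hA, hA', hsx,
    hsx']
  have hx := hreg.cutCard_insert_add hpx
  have hy := hreg.cutCard_insert_add hpy
  exact_mod_cast (by omega : (windowGraph G w).cutCard (insert (p y) T)
      + 2 * #((windowGraph G w).neighborFinset (p y) ∩ T)
    = (windowGraph G w).cutCard (insert (p x) T)
      + 2 * #((windowGraph G w).neighborFinset (p x) ∩ T))

end Swap

section Cost

variable (G : SimpleGraph V) (w : ℕ) (τ : ℝ)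

theorem ucost_comp_perm (tp : I → Bool) (p : I → V) (σ : Equiv.Perm I) (z : I) :
    ucost G w τ (tp ∘ σ) (p ∘ σ) z = ucost G w τ tp p (σ z) := by
  have hs : sCount G w (tp ∘ σ) (p ∘ σ) z = sCount G w tp p (σ z) := by
    simp only [sCount, Function.comp_apply]
    exact congrArg Set.ncard (Set.ext fun v => and_congr_right fun _ =>
      (σ.surjective.exists (p := fun y => p y = v ∧ tp y = tp (σ z))).symm)
  have hd : dCount G w (tp ∘ σ) (p ∘ σ) z = dCount G w tp p (σ z) := by
    simp only [dCount, Function.comp_apply]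
    exact congrArg Set.ncard (Set.ext fun v => and_congr_right fun _ =>
      (σ.surjective.exists (p := fun y => p y = v ∧ tp y ≠ tp (σ z))).symm)
  rw [ucost, ucost, hs, hd]

theorem vcost_comp_perm (tp : I → Bool) (fav : I → V) (p : I → V) (σ : Equiv.Perm I) (z : I) :
    vcost G w τ (tp ∘ σ) (fav ∘ σ) (p ∘ σ) z = vcost G w τ tp fav p (σ z) := by
  rw [vcost, ucost_comp_perm]
  rfl

theorem not_improving_swap_of_tp_eq [DecidableEq I] {tp : I → Bool} {fav : I → V} {v₀ : V}
    (hfav : ∀ i, fav i = v₀) (p : I → V) {x y : I} (h : tp x = tp y) :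
    ¬ (toLex (vcost G w τ tp fav (swapP p x y) x) < toLex (vcost G w τ tp fav p x) ∧
      toLex (vcost G w τ tp fav (swapP p x y) y) < toLex (vcost G w τ tp fav p y)) := by
  have htp : tp ∘ Equiv.swap x y = tp := funext fun z => by
    simp only [Function.comp_apply, Equiv.swap_apply_def]
    split_ifs <;> simp_all
  have hfav' : fav ∘ Equiv.swap x y = fav := funext fun z => by simp [hfav]
  have hswap : ∀ z, vcost G w τ tp fav (swapP p x y) z = vcost G w τ tp fav p (Equiv.swap x y z) :=
    fun z => by rw [← vcost_comp_perm, htp, hfav']; rfl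
  rw [hswap, hswap, Equiv.swap_apply_left, Equiv.swap_apply_right]
  exact fun ⟨hx, hy⟩ => lt_asymm hx hy

theorem sCount_lt_of_ucost_lt {tp : I → Bool} {p p' : I → V} {z z' : I}
    (hcount : sCount G w tp p' z' + dCount G w tp p' z' = sCount G w tp p z + dCount G w tp p z)
    (hlt : ucost G w τ tp p' z' < ucost G w τ tp p z) :
    sCount G w tp p z < sCount G w tp p' z' := by
  have hcountR : (sCount G w tp p' z' : ℝ) + dCount G w tp p' z'
      = sCount G w tp p z + dCount G w tp p z := by exact_mod_cast hcount
  rw [ucost, ucost, hcount, hcountR] at hlt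
  split_ifs at hlt
  · exact absurd hlt (lt_irrefl τ)
  by_contra! hle
  refine hlt.not_ge (max_le_max le_rfl (sub_le_sub_left ?_ τ))
  gcongr

end Cost

end Schelling

theorem cfSSG_regular_Phi_is_potential_general {V I : Type*} [Fintype V] [Fintype I] [DecidableEq I]
    (G : SimpleGraph V)
    (w : ℕ)
    (k : ℕ) (hreg : ∀ u : V, (nbhd G w u).ncard = k)
    (τ : ℝ)
    (tp : I → Bool)
    (fav : I → V) (hfav : ∃ v0 : V, ∀ i : I, fav i = v0)
    (p : I → V) (hp : Function.Bijective p)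
    (x y : I)
    (hx : toLex (vcost G w τ tp fav (swapP p x y) x) < toLex (vcost G w τ tp fav p x))
    (hy : toLex (vcost G w τ tp fav (swapP p x y) y) < toLex (vcost G w τ tp fav p y)) :
    Phi G w tp (swapP p x y) < Phi G w tp p := by
  obtain ⟨v₀, hv₀⟩ := hfav
  have hW := isRegularOfDegree_windowGraph hreg
  have htp : tp x ≠ tp y := fun h => not_improving_swap_of_tp_eq G w τ hv₀ p h ⟨hx, hy⟩
  have hp' : Function.Bijective (swapP p x y) := hp.comp (Equiv.swap x y).bijective
  have hcount : ∀ z, sCount G w tp (swapP p x y) z + dCount G w tp (swapP p x y) z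
      = sCount G w tp p z + dCount G w tp p z := fun z => by
    rw [sCount_add_dCount G w tp hW hp', sCount_add_dCount G w tp hW hp]
  have hΦx := Phi_swapP_add_two_mul_sCount hW hp htp
  have hΦy := Phi_swapP_add_two_mul_sCount hW hp htp.symm
  rw [swapP_comm] at hΦy
  rw [Prod.Lex.toLex_lt_toLex] at hx hy
  rcases hx with hx | ⟨-, hx⟩
  · linarith [(Nat.cast_lt (α := ℝ)).2 (sCount_lt_of_ucost_lt G w τ (hcount x) hx)]
  rcases hy with hy | ⟨-, hy⟩
  · linarith [(Nat.cast_lt (α := ℝ)).2 (sCount_lt_of_ucost_lt G w τ (hcount y) hy)]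
  simp only [vcost, hv₀, swapP_apply_left, swapP_apply_right] at hx hy
  omega

/-- In the common-favorites swap Schelling game on a regular network (any
`τ ∈ [0,1]`, any `w ≥ 1`), the number of colored pairs `Φ` is an ordinal potential function:
if every node of `G` has the same number `k` of nodes within distance `w` and all agents
share the same favorite node, then every improving swap strictly decreases `Φ`.
Consequently the cf-SSG on regular networks is a potential game. -/
theorem cfSSG_regular_Phi_is_potential {V I : Type*} [Fintype V] [Fintype I] [DecidableEq I]
    (G : SimpleGraph V) (hG : G.Connected)
    (w : ℕ) (hw : 1 ≤ w)
    (k : ℕ) (hreg : ∀ u : V, (nbhd G w u).ncard = k)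
    (τ : ℝ) (hτ0 : 0 ≤ τ) (hτ1 : τ ≤ 1)
    (tp : I → Bool) (hA : 2 ≤ (typeA tp).card) (hB : 2 ≤ (typeB tp).card)
    (fav : I → V) (hfav : ∃ v0 : V, ∀ i : I, fav i = v0)
    (p : I → V) (hp : Function.Bijective p)
    (x y : I)
    (hx : toLex (vcost G w τ tp fav (swapP p x y) x) < toLex (vcost G w τ tp fav p x))
    (hy : toLex (vcost G w τ tp fav (swapP p x y) y) < toLex (vcost G w τ tp fav p y)) :
    Phi G w tp (swapP p x y) < Phi G w tp p :=
  cfSSG_regular_Phi_is_potential_general G w k hreg τ tp fav hfav p hp x y hx hy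
end

section
/- There exist a finite connected graph G (a grid), disjoint agent sets A and B, a common favorite node for all agents, and window size w = 1 such that for every tolerance parameter τ with 1/2 < τ ≤ 2/3 there is an improving response cycle in the common-favorites jump Schelling game: a sequence of placements p_0, p_1, …, p_6 with p_6 = p_0 in which each p_{i+1} arises from p_i by an improving jump of a single agent. Consequently, for 1/2 < τ ≤ 2/3 there exists no ordinal potential function for the cf-JSG (and hence for the JSG). -/
open SimpleGraph Finset

open Schelling

/-!
On the 3 × 3 grid with common favorite node `favCell = (0,1)`, fix an `A`-agent at `(2,0)` and
`B`-agents at `(0,0)` and `(1,0)`. The two remaining `A`-agents take turns moving among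
`favCell`, `cornerCell = (0,2)` and `farCell = (2,1)`, the node beside the fixed `A`-agent.
An agent at `farCell` whose partner sits at `favCell` jumps to `cornerCell`: it stays
segregated and gets closer to `favCell`. An agent at `favCell` whose partner sits at
`cornerCell` sees one friend and one enemy, a ratio `1/2 < τ`, and jumps to `farCell`, where it
is segregated. An agent at `cornerCell` whose partner sits at `farCell` has no friend in view,
there or at `favCell`, so its first cost coordinate is `τ` either way, and it jumps to the
closer `favCell`. Repeating this with the roles of the two agents exchanged closes a cycle of
six improving jumps, along which an ordinal potential would have to decrease strictly.
-/

namespace Schelling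

section Costs

variable {V I : Type*} {G : SimpleGraph V} {w : ℕ} {τ : ℝ} {tp : I → Bool} {fav : I → V}
  {p q : I → V} {x : I}

theorem nbhd_one_of_connected (hG : G.Connected) (u : V) : nbhd G 1 u = G.neighborSet u := by
  ext v
  refine ⟨fun ⟨hne, hle⟩ => ?_, fun h => ⟨h.ne', (dist_eq_one_iff_adj.mpr h).le⟩⟩
  exact dist_eq_one_iff_adj.mp (le_antisymm hle (hG.pos_dist_of_ne hne.symm))

theorem sCount_one_eq_card [Fintype V] [DecidableEq V] [DecidableRel G.Adj] [Fintype I]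
    (hG : G.Connected) (tp : I → Bool) (p : I → V) (x : I) :
    sCount G 1 tp p x = #{v | G.Adj (p x) v ∧ ∃ y, p y = v ∧ tp y = tp x} := by
  rw [sCount, nbhd_one_of_connected hG, ← Set.ncard_coe_finset]
  congr
  ext
  simp

theorem dCount_one_eq_card [Fintype V] [DecidableEq V] [DecidableRel G.Adj] [Fintype I]
    (hG : G.Connected) (tp : I → Bool) (p : I → V) (x : I) :
    dCount G 1 tp p x = #{v | G.Adj (p x) v ∧ ∃ y, p y = v ∧ tp y ≠ tp x} := by
  rw [dCount, nbhd_one_of_connected hG, ← Set.ncard_coe_finset]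
  congr
  ext
  simp

theorem happy_of_dCount_eq_zero (hτ : τ ≤ 1) (hs : sCount G w tp p x ≠ 0)
    (hd : dCount G w tp p x = 0) : happy G w τ tp p x := by
  refine ⟨by omega, ?_⟩
  rwa [hd, Nat.cast_zero, add_zero, div_self (Nat.cast_ne_zero.mpr hs)]

theorem not_happy_of_sCount_le_dCount (hτ : 1 / 2 < τ)
    (h : sCount G w tp p x ≤ dCount G w tp p x) : ¬ happy G w τ tp p x := by
  rintro ⟨hne, hle⟩
  have hpos : (0 : ℝ) < sCount G w tp p x + dCount G w tp p x := by
    exact_mod_cast Nat.pos_of_ne_zero hne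
  have hsd : (sCount G w tp p x : ℝ) ≤ dCount G w tp p x := by exact_mod_cast h
  rw [le_div_iff₀ hpos] at hle
  nlinarith

theorem ucost_eq_zero_of_happy (h : happy G w τ tp p x) : ucost G w τ tp p x = 0 := by
  rw [ucost, if_neg h.1]
  exact max_eq_left (sub_nonpos.mpr h.2)

theorem ucost_pos_of_not_happy (hτ : 0 < τ) (h : ¬ happy G w τ tp p x) :
    0 < ucost G w τ tp p x := by
  unfold ucost
  split_ifs with h0
  · exact hτ
  · exact lt_max_of_lt_right (sub_pos.mpr (lt_of_not_ge fun hle => h ⟨h0, hle⟩))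

theorem ucost_eq_of_sCount_eq_zero (hτ : 0 ≤ τ) (hs : sCount G w tp p x = 0) :
    ucost G w τ tp p x = τ := by
  unfold ucost
  split_ifs
  · rfl
  · simp [hs, hτ]

theorem toLex_vcost_lt_of_ucost_lt (h : ucost G w τ tp q x < ucost G w τ tp p x) :
    toLex (vcost G w τ tp fav q x) < toLex (vcost G w τ tp fav p x) :=
  Prod.Lex.lt_iff.mpr (Or.inl h)

theorem toLex_vcost_lt_of_ucost_eq_of_dist_lt (h : ucost G w τ tp q x = ucost G w τ tp p x)
    (hdist : G.dist (fav x) (q x) < G.dist (fav x) (p x)) :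
    toLex (vcost G w τ tp fav q x) < toLex (vcost G w τ tp fav p x) :=
  Prod.Lex.lt_iff.mpr (Or.inr ⟨h, Nat.succ_lt_succ hdist⟩)

theorem toLex_vcost_lt_of_not_happy_of_happy (hτ : 0 < τ) (hp : ¬ happy G w τ tp p x)
    (hq : happy G w τ tp q x) :
    toLex (vcost G w τ tp fav q x) < toLex (vcost G w τ tp fav p x) :=
  toLex_vcost_lt_of_ucost_lt <| (ucost_eq_zero_of_happy hq).trans_lt (ucost_pos_of_not_happy hτ hp)

theorem toLex_vcost_lt_of_happy_of_dist_lt (hp : happy G w τ tp p x) (hq : happy G w τ tp q x)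
    (hdist : G.dist (fav x) (q x) < G.dist (fav x) (p x)) :
    toLex (vcost G w τ tp fav q x) < toLex (vcost G w τ tp fav p x) :=
  toLex_vcost_lt_of_ucost_eq_of_dist_lt
    ((ucost_eq_zero_of_happy hq).trans (ucost_eq_zero_of_happy hp).symm) hdist

theorem toLex_vcost_lt_of_sCount_eq_zero_of_dist_lt (hτ : 0 ≤ τ) (hp : sCount G w tp p x = 0)
    (hq : sCount G w tp q x = 0) (hdist : G.dist (fav x) (q x) < G.dist (fav x) (p x)) :
    toLex (vcost G w τ tp fav q x) < toLex (vcost G w τ tp fav p x) :=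
  toLex_vcost_lt_of_ucost_eq_of_dist_lt
    ((ucost_eq_of_sCount_eq_zero hτ hq).trans (ucost_eq_of_sCount_eq_zero hτ hp).symm) hdist

end Costs

def IsImprovingJump {V I : Type*} [DecidableEq I] (G : SimpleGraph V) (w : ℕ) (τ : ℝ)
    (tp : I → Bool) (fav : I → V) (p q : I → V) : Prop :=
  ∃ (x : I) (v : V), v ∉ Set.range p ∧ q = Function.update p x v ∧
    toLex (vcost G w τ tp fav q x) < toLex (vcost G w τ tp fav p x)

theorem not_exists_potential_of_improving_cycle {V I β : Type*} [DecidableEq I] [Preorder β]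
    {G : SimpleGraph V} {w : ℕ} {τ : ℝ} {tp : I → Bool} {fav : I → V} {n : ℕ} [NeZero n]
    (p : Fin (n + 1) → I → V) (hinj : ∀ i, Function.Injective (p i))
    (hcycle : p (Fin.last n) = p 0)
    (hstep : ∀ i : Fin n, IsImprovingJump G w τ tp fav (p i.castSucc) (p i.succ)) :
    ¬ ∃ f : (I → V) → β, ∀ q : I → V, Function.Injective q →
        ∀ (x : I) (v : V), v ∉ Set.range q →
          toLex (vcost G w τ tp fav (Function.update q x v) x) <
            toLex (vcost G w τ tp fav q x) →
          f (Function.update q x v) < f q := by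
  rintro ⟨f, hf⟩
  have hanti : StrictAnti (f ∘ p) := Fin.strictAnti_iff_succ_lt.mpr fun i => by
    obtain ⟨x, v, hv, hjump, hlt⟩ := hstep i
    rw [hjump] at hlt
    simpa only [Function.comp_apply, hjump] using hf _ (hinj _) x v hv hlt
  have hlast := hanti (Fin.last_pos' (n := n))
  simp only [Function.comp_apply, hcycle] at hlast
  exact lt_irrefl _ hlast

namespace GridExample

instance (n : ℕ) : DecidableRel (pathGraph n).Adj := fun _ _ =>
  decidable_of_iff _ pathGraph_adj.symm

instance {α β : Type*} {G : SimpleGraph α} {H : SimpleGraph β} [DecidableEq α] [DecidableEq β]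
    [DecidableRel G.Adj] [DecidableRel H.Adj] : DecidableRel (G □ H).Adj := fun _ _ =>
  decidable_of_iff _ boxProd_adj.symm

abbrev Cell := Fin 3 × Fin 3

abbrev grid : SimpleGraph Cell := pathGraph 3 □ pathGraph 3

theorem grid_connected : grid.Connected :=
  (pathGraph_connected 2).boxProd (pathGraph_connected 2)

def agentType : Fin 5 → Bool := ![true, true, true, false, false]

def favCell : Cell := (0, 1)

def cornerCell : Cell := (0, 2)

def farCell : Cell := (2, 1)

def place (a b : Cell) : Fin 5 → Cell := ![(2, 0), a, b, (0, 0), (1, 0)]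

def cycle : Fin 7 → Fin 5 → Cell :=
  ![place farCell favCell, place cornerCell favCell, place cornerCell farCell,
    place favCell farCell, place favCell cornerCell, place farCell cornerCell,
    place farCell favCell]

theorem injective_cycle (i : Fin 7) : Function.Injective (cycle i) := by
  revert i
  decide

theorem dist_favCell_cornerCell_lt_farCell :
    grid.dist favCell cornerCell < grid.dist favCell farCell := by
  rw [dist_eq_one_iff_adj.mpr (by decide)]
  exact grid_connected.one_lt_dist_of_ne_of_not_adj (by decide) (by decide)

theorem dist_favCell_favCell_lt_cornerCell :
    grid.dist favCell favCell < grid.dist favCell cornerCell := by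
  rw [dist_self, dist_eq_one_iff_adj.mpr (by decide)]
  exact one_pos

variable {τ : ℝ}

theorem isImprovingJump_farCell_cornerCell (hτ : τ ≤ 1) :
    IsImprovingJump grid 1 τ agentType (fun _ => favCell) (place farCell favCell)
        (place cornerCell favCell) ∧
      IsImprovingJump grid 1 τ agentType (fun _ => favCell) (place favCell farCell)
        (place favCell cornerCell) := by
  refine ⟨⟨1, cornerCell, by decide, by decide, toLex_vcost_lt_of_happy_of_dist_lt
      (happy_of_dCount_eq_zero hτ ?_ ?_) (happy_of_dCount_eq_zero hτ ?_ ?_)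
      dist_favCell_cornerCell_lt_farCell⟩,
    ⟨2, cornerCell, by decide, by decide, toLex_vcost_lt_of_happy_of_dist_lt
      (happy_of_dCount_eq_zero hτ ?_ ?_) (happy_of_dCount_eq_zero hτ ?_ ?_)
      dist_favCell_cornerCell_lt_farCell⟩⟩
  all_goals
    simp only [sCount_one_eq_card grid_connected, dCount_one_eq_card grid_connected]
    decide

theorem isImprovingJump_favCell_farCell (hτ₁ : 1 / 2 < τ) (hτ : τ ≤ 1) :
    IsImprovingJump grid 1 τ agentType (fun _ => favCell) (place cornerCell favCell)
        (place cornerCell farCell) ∧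
      IsImprovingJump grid 1 τ agentType (fun _ => favCell) (place favCell cornerCell)
        (place farCell cornerCell) := by
  have hτ₀ : 0 < τ := by linarith
  refine ⟨⟨2, farCell, by decide, by decide, toLex_vcost_lt_of_not_happy_of_happy hτ₀
      (not_happy_of_sCount_le_dCount hτ₁ ?_) (happy_of_dCount_eq_zero hτ ?_ ?_)⟩,
    ⟨1, farCell, by decide, by decide, toLex_vcost_lt_of_not_happy_of_happy hτ₀
      (not_happy_of_sCount_le_dCount hτ₁ ?_) (happy_of_dCount_eq_zero hτ ?_ ?_)⟩⟩
  all_goals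
    simp only [sCount_one_eq_card grid_connected, dCount_one_eq_card grid_connected]
    decide

theorem isImprovingJump_cornerCell_favCell (hτ : 0 ≤ τ) :
    IsImprovingJump grid 1 τ agentType (fun _ => favCell) (place cornerCell farCell)
        (place favCell farCell) ∧
      IsImprovingJump grid 1 τ agentType (fun _ => favCell) (place farCell cornerCell)
        (place farCell favCell) := by
  refine ⟨⟨1, favCell, by decide, by decide,
      toLex_vcost_lt_of_sCount_eq_zero_of_dist_lt hτ ?_ ?_ dist_favCell_favCell_lt_cornerCell⟩,
    ⟨2, favCell, by decide, by decide,
      toLex_vcost_lt_of_sCount_eq_zero_of_dist_lt hτ ?_ ?_ dist_favCell_favCell_lt_cornerCell⟩⟩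
  all_goals
    simp only [sCount_one_eq_card grid_connected]
    decide

theorem isImprovingJump_cycle (hτ₁ : 1 / 2 < τ) (hτ : τ ≤ 1) (i : Fin 6) :
    IsImprovingJump grid 1 τ agentType (fun _ => favCell) (cycle i.castSucc) (cycle i.succ) := by
  have h₁ := isImprovingJump_farCell_cornerCell hτ
  have h₂ := isImprovingJump_favCell_farCell hτ₁ hτ
  have h₃ := isImprovingJump_cornerCell_favCell (τ := τ) (by linarith)
  fin_cases i
  exacts [h₁.1, h₂.1, h₃.1, h₁.2, h₂.2, h₃.2]

end GridExample

end Schelling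

/-- There exist a finite connected graph `G` (a grid), disjoint agent sets,
a common favorite node and window size `w = 1` such that for every `τ` with `1/2 < τ ≤ 2/3`
the common-favorites jump Schelling game has an improving response cycle
`p_0, …, p_6` with `p_6 = p_0`; consequently, for such `τ` no ordinal potential function
exists for the cf-JSG (and hence for the JSG). -/
theorem cfJSG_IRC_high :
    ∃ (V : Type) (_ : Fintype V) (I : Type) (_ : Fintype I) (_ : DecidableEq I)
      (G : SimpleGraph V) (tp : I → Bool) (fav : I → V),
      G.Connected ∧
      (∃ v0 : V, ∀ i : I, fav i = v0) ∧
      2 ≤ (typeA tp).card ∧ 2 ≤ (typeB tp).card ∧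
      Fintype.card I < Fintype.card V ∧
      ∀ τ : ℝ, 1 / 2 < τ → τ ≤ 2 / 3 →
        (∃ p : Fin 7 → I → V,
          (∀ i : Fin 7, Function.Injective (p i)) ∧
          p 6 = p 0 ∧
          (∀ i : Fin 6, ∃ (x : I) (v : V),
            v ∉ Set.range (p i.castSucc) ∧
            p i.succ = Function.update (p i.castSucc) x v ∧
            toLex (vcost G 1 τ tp fav (p i.succ) x) <
              toLex (vcost G 1 τ tp fav (p i.castSucc) x))) ∧
        ¬ ∃ f : (I → V) → ℝ, ∀ q : I → V, Function.Injective q →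
            ∀ (x : I) (v : V), v ∉ Set.range q →
              toLex (vcost G 1 τ tp fav (Function.update q x v) x) <
                toLex (vcost G 1 τ tp fav q x) →
              f (Function.update q x v) < f q := by
  open GridExample in
  exact ⟨Cell, inferInstance, Fin 5, inferInstance, inferInstance, grid, agentType,
    fun _ => favCell, grid_connected, ⟨favCell, fun _ => rfl⟩, by decide, by decide, by decide,
    fun τ hτ₁ hτ₂ =>
      have hstep := isImprovingJump_cycle hτ₁ (hτ₂.trans (by norm_num))
      ⟨⟨cycle, injective_cycle, rfl, fun i => hstep i⟩,
        not_exists_potential_of_improving_cycle cycle injective_cycle rfl hstep⟩⟩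
end
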